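/- Let T>0, d≥1, Ω⊆ℝ^d be a bounded measurable set, and σ:ℝ→ℝ be globally Lipschitz; let Σ:ℝ^d→ℝ^d be the coordinatewise application of σ, i.e. Σ(x)=(σ(x_1),…,σ(x_d)). Fix m∈ℤ₊ and weight parameters A_i,W_i∈ℝ^{d×d}, B_i∈ℝ^d for i=0,…,m−1. For each N∈ℤ₊ define the T/N-periodic-in-time vector field Q^N:[0,T]×ℝ^d→ℝ^d by Q^N(t+nT/N, x)= m·A_i Σ(W_i x + B_i) for t∈[iT/(mN),(i+1)T/(mN)), for all n∈{0,…,N−1}, i∈{0,…,m−1}, x∈ℝ^d. Then Q^N converges weakly-* in L^∞((0,T)×Ω)^d to the time-independent vector field Q(x)=Σ_{i=0}^{m−1} A_i Σ(W_i x + B_i); that is, for every φ∈L¹((0,T)×Ω;ℝ^d), ∫₀^T∫_Ω Q^N(t,x)·φ(t,x) dx dt → ∫₀^T∫_Ω Q(x)·φ(t,x) dx dt as N→∞. -/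

import Mathlib

/-!
On `[0, T)` the field `Q^N(t, x)` equals `∑ i, χᵢ(N t) • vᵢ(x)` with `vᵢ(x) = Aᵢ Σ(Wᵢ x + Bᵢ)`,
where `χᵢ` is the `T`-periodic function equal to `m` on the `i`-th of the `m` equal parts of each
period and to `0` elsewhere, so that its mean is `1`. After Fubini in `x`, the theorem is the
classical weak-* convergence `χ(N ·) → ⨍ χ` of a bounded periodic `χ`, tested against `L¹(ℝ)`.
That follows by averaging `∫ χ(N t) h(t) dt` over the translations `t ↦ t + s`, `0 < s ≤ T / N`,
and using the continuity of translation in `L¹(ℝ)`.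
-/

open MeasureTheory Filter Set Topology Function

section

variable {E : Type*} [NormedAddCommGroup E]

theorem HasCompactSupport.tendsto_integral_norm_comp_add_sub {u : ℝ → E}
    (hu : Continuous u) (hsupp : HasCompactSupport u) :
    Tendsto (fun s => ∫ t, ‖u (t + s) - u t‖) (𝓝 0) (𝓝 0) := by
  obtain ⟨C, hC⟩ := hu.bounded_above_of_compact_support hsupp
  set L := Metric.cthickening 1 (tsupport u)
  have hL : IsCompact L := hsupp.isCompact.cthickening
  have hbound : ∀ s ∈ Metric.ball (0 : ℝ) 1, ∀ t,
      ‖u (t + s) - u t‖ ≤ L.indicator (fun _ => 2 * C) t := by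
    intro s hs t
    by_cases ht : t ∈ L
    · rw [indicator_of_mem ht]
      exact (norm_sub_le _ _).trans (by linarith [hC (t + s), hC t])
    · have hts : t + s ∉ tsupport u := fun h => ht <|
        Metric.mem_cthickening_of_dist_le _ _ _ _ h (by
          simpa [Real.dist_eq, abs_sub_comm] using (mem_ball_zero_iff.1 hs).le)
      have ht' : t ∉ tsupport u := fun h => ht (Metric.self_subset_cthickening _ h)
      simp [indicator_of_notMem ht, image_eq_zero_of_notMem_tsupport hts,
        image_eq_zero_of_notMem_tsupport ht']
  have hlim : ∀ t, Tendsto (fun s => ‖u (t + s) - u t‖) (𝓝 0) (𝓝 0) := fun t => by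
    have : Continuous fun s => ‖u (t + s) - u t‖ := by fun_prop
    simpa using this.tendsto 0
  simpa using tendsto_integral_filter_of_dominated_convergence (μ := volume)
    (L.indicator fun _ => 2 * C)
    (Eventually.of_forall fun s => by fun_prop)
    (eventually_of_mem (Metric.ball_mem_nhds 0 one_pos) fun s hs =>
      Eventually.of_forall fun t => by simpa using hbound s hs t)
    ((integrable_indicator_iff hL.measurableSet).2 (integrableOn_const hL.measure_lt_top.ne))
    (Eventually.of_forall hlim)

variable [NormedSpace ℝ E]

theorem MeasureTheory.Integrable.tendsto_integral_norm_comp_add_sub {h : ℝ → E}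
    (hh : Integrable h) : Tendsto (fun s => ∫ t, ‖h (t + s) - h t‖) (𝓝 0) (𝓝 0) := by
  rw [Metric.tendsto_nhds]
  intro ε hε
  obtain ⟨u, hu_supp, hhu, hu, hu_int⟩ :=
    hh.exists_hasCompactSupport_integral_sub_le (ε := ε / 3) (by positivity)
  filter_upwards [Metric.tendsto_nhds.1 (hu_supp.tendsto_integral_norm_comp_add_sub hu) _
    (by positivity : 0 < ε / 3)] with s hs
  have hd : Integrable fun t => h t - u t := hh.sub hu_int
  have h₁ : Integrable fun t => ‖h (t + s) - u (t + s)‖ := (hd.comp_add_right s).norm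
  have h₂ : Integrable fun t => ‖u (t + s) - u t‖ :=
    ((hu_int.comp_add_right s).sub hu_int).norm
  have h₁₂ : Integrable fun t => ‖h (t + s) - u (t + s)‖ + ‖u (t + s) - u t‖ := h₁.add h₂
  have key : ∫ t, ‖h (t + s) - h t‖ ≤
      (∫ t, ‖h (t + s) - u (t + s)‖) + (∫ t, ‖u (t + s) - u t‖) + ∫ t, ‖h t - u t‖ :=
    calc ∫ t, ‖h (t + s) - h t‖
        ≤ ∫ t, (‖h (t + s) - u (t + s)‖ + ‖u (t + s) - u t‖ + ‖h t - u t‖) := by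
          refine integral_mono ((hh.comp_add_right s).sub hh).norm (h₁₂.add hd.norm) fun t => ?_
          calc ‖h (t + s) - h t‖
              = ‖(h (t + s) - u (t + s)) + (u (t + s) - u t) - (h t - u t)‖ := by abel_nf
            _ ≤ _ := norm_sub_le_of_le (norm_add_le _ _) le_rfl
      _ = _ := by rw [integral_add h₁₂ hd.norm, integral_add h₁ h₂]
  have hshift : ∫ t, ‖h (t + s) - u (t + s)‖ = ∫ t, ‖h t - u t‖ :=
    integral_add_right_eq_self (fun t => ‖h t - u t‖) s
  rw [Real.dist_eq, sub_zero, abs_of_nonneg (integral_nonneg fun _ => norm_nonneg _)] at hs ⊢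
  linarith

theorem MeasureTheory.norm_integral_smul_sub_integral_smul_le {α : Type*} [MeasurableSpace α]
    {μ : Measure α} {w : α → ℝ} (hw : AEStronglyMeasurable w μ) {M : ℝ} (hM : ∀ t, ‖w t‖ ≤ M)
    {g₁ g₂ : α → E} (hg₁ : Integrable g₁ μ) (hg₂ : Integrable g₂ μ) :
    ‖(∫ t, w t • g₁ t ∂μ) - ∫ t, w t • g₂ t ∂μ‖ ≤ M * ∫ t, ‖g₁ t - g₂ t‖ ∂μ := by
  have hwg₁ : Integrable (fun t => w t • g₁ t) μ := hg₁.bdd_smul M hw (ae_of_all _ hM)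
  have hwg₂ : Integrable (fun t => w t • g₂ t) μ := hg₂.bdd_smul M hw (ae_of_all _ hM)
  rw [← integral_sub hwg₁ hwg₂, ← integral_const_mul]
  refine norm_integral_le_of_norm_le ((hg₁.sub hg₂).norm.const_mul M) (ae_of_all _ fun t => ?_)
  rw [← smul_sub, norm_smul]
  exact mul_le_mul_of_nonneg_right (hM t) (norm_nonneg _)

end

section Periodic

variable {E : Type*} [NormedAddCommGroup E] [NormedSpace ℝ E] [CompleteSpace E]
  {f : ℝ → ℝ} {c : ℝ}

theorem Function.Periodic.intervalIntegral_comp_mul_add (hf : Periodic f c) (hc : c ≠ 0)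
    {r : ℝ} (hr : 0 < r) (t : ℝ) :
    ∫ s in 0..c / r, f (r * (t + s)) = c / r * ⨍ s in 0..c, f s := by
  have : ∫ s in 0..c / r, f (r * s + r * t) = r⁻¹ * ∫ s in r * t..r * t + c, f s := by
    rw [intervalIntegral.integral_comp_mul_add (f := f) hr.ne', smul_eq_mul]
    congr 2 <;> field_simp <;> ring
  simp_rw [show ∀ s, r * (t + s) = r * s + r * t from fun s => by ring]
  rw [this, hf.intervalIntegral_add_eq (r * t) 0, zero_add, interval_average_eq, smul_eq_mul,
    sub_zero]
  field_simp

/-- Averaging `∫ f (r * t) • h t = ∫ f (r * (t + s)) • h (t + s)` over `s ∈ (0, c / r]` and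
swapping the integrals turns the inner `s`-integral into the mean of `f`; what is left is
bounded by the `L¹` modulus of continuity of `h` at scale `c / r`. -/
theorem Function.Periodic.norm_integral_comp_mul_smul_sub_le (hf : Periodic f c) (hc : 0 < c)
    (hfm : Measurable f) {M : ℝ} (hM : ∀ s, ‖f s‖ ≤ M) {h : ℝ → E} (hh : Integrable h)
    {r ε : ℝ} (hr : 0 < r) (hε : ∀ s ∈ Ioc 0 (c / r), ∫ t, ‖h (t + s) - h t‖ ≤ ε) :
    ‖(∫ t, f (r * t) • h t) - (⨍ s in 0..c, f s) • ∫ t, h t‖ ≤ M * ε := by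
  set τ := c / r
  have hτ : 0 < τ := div_pos hc hr
  have hM0 : 0 ≤ M := (norm_nonneg _).trans (hM 0)
  set I := ∫ t, f (r * t) • h t
  set F : ℝ → ℝ → E := fun s t => f (r * (t + s)) • h t
  have hFint : Integrable (uncurry F) ((volume.restrict (Ioc 0 τ)).prod volume) :=
    (hh.comp_snd _).bdd_smul M (hfm.comp_aemeasurable (by fun_prop)).aestronglyMeasurable
      (Eventually.of_forall fun _ => hM _)
  have hFubini : ∫ s in 0..τ, ∫ t, F s t = (τ * ⨍ s in 0..c, f s) • ∫ t, h t := by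
    rw [intervalIntegral.integral_of_le hτ.le, integral_integral_swap hFint, ← integral_smul]
    congr 1 with t
    rw [integral_smul_const, ← intervalIntegral.integral_of_le hτ.le,
      hf.intervalIntegral_comp_mul_add hc.ne' hr]
  have hdiff : ∀ s ∈ Ioc 0 τ, ‖I - ∫ t, F s t‖ ≤ M * ε := fun s hs => by
    rw [show I = ∫ t, f (r * (t + s)) • h (t + s) from
      (integral_add_right_eq_self (fun t => f (r * t) • h t) s).symm]
    exact (norm_integral_smul_sub_integral_smul_le
      (hfm.comp_aemeasurable (by fun_prop)).aestronglyMeasurable (fun _ => hM _)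
      (hh.comp_add_right s) hh).trans (mul_le_mul_of_nonneg_left (hε s hs) hM0)
  have hFs : IntervalIntegrable (fun s => ∫ t, F s t) volume 0 τ :=
    (intervalIntegrable_iff_integrableOn_Ioc_of_le hτ.le).2 hFint.integral_prod_left
  have hsplit :
      τ • (I - (⨍ s in 0..c, f s) • ∫ t, h t) = ∫ s in 0..τ, (I - ∫ t, F s t) := by
    rw [intervalIntegral.integral_sub intervalIntegrable_const hFs, hFubini,
      intervalIntegral.integral_const, sub_zero, smul_sub, smul_smul]
  have hbound := intervalIntegral.norm_integral_le_of_norm_le_const (a := 0) (b := τ)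
    (fun s hs => hdiff s (by rwa [uIoc_of_le hτ.le] at hs))
  rw [← hsplit, norm_smul, Real.norm_of_nonneg hτ.le, sub_zero, abs_of_pos hτ,
    mul_comm (M * ε)] at hbound
  exact le_of_mul_le_mul_left hbound hτ

theorem Function.Periodic.tendsto_integral_comp_mul_smul (hf : Periodic f c) (hc : 0 < c)
    (hfm : Measurable f) {M : ℝ} (hM : ∀ s, ‖f s‖ ≤ M) {h : ℝ → E}
    (hh : Integrable h) :
    Tendsto (fun N : ℕ => ∫ t, f (N * t) • h t) atTop
      (𝓝 ((⨍ s in 0..c, f s) • ∫ t, h t)) := by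
  have hM0 : 0 ≤ M := (norm_nonneg _).trans (hM 0)
  rw [Metric.tendsto_atTop]
  intro ε hε
  obtain ⟨δ, hδ, hω⟩ := Metric.tendsto_nhds_nhds.1 hh.tendsto_integral_norm_comp_add_sub
    (ε / (M + 1)) (by positivity)
  obtain ⟨N₀, hN₀⟩ := exists_nat_gt (c / δ)
  refine ⟨N₀, fun N hN => ?_⟩
  have hNpos : (0 : ℝ) < N := (div_pos hc hδ).trans (hN₀.trans_le (Nat.cast_le.2 hN))
  have hcN : c / N < δ := by
    rw [div_lt_iff₀ hNpos, mul_comm, ← div_lt_iff₀ hδ]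
    exact hN₀.trans_le (Nat.cast_le.2 hN)
  rw [dist_eq_norm]
  refine (hf.norm_integral_comp_mul_smul_sub_le hc hfm hM hh hNpos (ε := ε / (M + 1))
    fun s hs => ?_).trans_lt ?_
  · have := hω (x := s) (by
      rw [Real.dist_eq, sub_zero, abs_of_pos hs.1]; exact hs.2.trans_lt hcN)
    rw [Real.dist_eq, sub_zero] at this
    exact (le_abs_self _).trans this.le
  · rw [mul_div_assoc', div_lt_iff₀ (by positivity)]
    nlinarith

theorem Function.Periodic.tendsto_integral_prod_comp_mul_smul (hf : Periodic f c) (hc : 0 < c)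
    (hfm : Measurable f) {M : ℝ} (hM : ∀ s, ‖f s‖ ≤ M) {X : Type*} [MeasurableSpace X]
    {μ : Measure X} [SFinite μ] {g : ℝ × X → E} (hg : Integrable g (volume.prod μ)) :
    Tendsto (fun N : ℕ => ∫ p, f (N * p.1) • g p ∂(volume.prod μ)) atTop
      (𝓝 ((⨍ s in 0..c, f s) • ∫ p, g p ∂(volume.prod μ))) := by
  have hint : ∀ N : ℕ, Integrable (fun p => f (N * p.1) • g p) (volume.prod μ) := fun N =>
    hg.bdd_smul M (hfm.comp (by fun_prop)).aestronglyMeasurable (Eventually.of_forall fun _ => hM _)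
  simp_rw [integral_prod _ hg, fun N => integral_prod _ (hint N), integral_smul]
  exact hf.tendsto_integral_comp_mul_smul hc hfm hM hg.integral_prod_left

theorem Function.Periodic.tendsto_setIntegral_prod_comp_mul_smul (hf : Periodic f c)
    (hc : 0 < c) (hfm : Measurable f) {M : ℝ} (hM : ∀ s, ‖f s‖ ≤ M) {X : Type*}
    [MeasurableSpace X] {μ : Measure X} [SFinite μ] {s : Set (ℝ × X)} (hs : MeasurableSet s)
    {g : ℝ × X → E} (hg : IntegrableOn g s (volume.prod μ)) :
    Tendsto (fun N : ℕ => ∫ p in s, f (N * p.1) • g p ∂(volume.prod μ)) atTop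
      (𝓝 ((⨍ x in 0..c, f x) • ∫ p in s, g p ∂(volume.prod μ))) := by
  simp_rw [← integral_indicator hs, indicator_smul_apply]
  exact hf.tendsto_integral_prod_comp_mul_smul hc hfm hM ((integrable_indicator_iff hs).2 hg)

end Periodic

theorem mem_Ico_div_iff_natFloor_mul_eq {m : ℕ} (hm : 0 < m) {r : ℝ} (hr : 0 ≤ r) (i : ℕ) :
    r ∈ Ico ((i : ℝ) / m) ((i + 1) / m) ↔ ⌊m * r⌋₊ = i := by
  have hm' : (0 : ℝ) < m := Nat.cast_pos.2 hm
  rw [Nat.floor_eq_iff (by positivity), mem_Ico, div_le_iff₀ hm', lt_div_iff₀ hm', mul_comm r]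

noncomputable def splittingWeight (T : ℝ) (m i : ℕ) (s : ℝ) : ℝ :=
  (Ico ((i : ℝ) / m) ((i + 1) / m)).indicator (fun _ => (m : ℝ)) (Int.fract (s / T))

section SplittingWeight

variable {E : Type*} [NormedAddCommGroup E] [NormedSpace ℝ E] {T : ℝ} {m i : ℕ}

theorem periodic_splittingWeight (hT : T ≠ 0) : Periodic (splittingWeight T m i) T := fun s => by
  simp only [splittingWeight, add_div, div_self hT, Int.fract_add_one]

@[fun_prop]
theorem measurable_splittingWeight : Measurable (splittingWeight T m i) :=
  (measurable_const.indicator measurableSet_Ico).comp (by fun_prop)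

theorem norm_splittingWeight_le (s : ℝ) : ‖splittingWeight T m i s‖ ≤ m := by
  unfold splittingWeight
  by_cases h : Int.fract (s / T) ∈ Ico ((i : ℝ) / m) ((i + 1) / m) <;> simp [h]

theorem splittingWeight_of_mem_Ico (hT : 0 < T) {s : ℝ} (hs : s ∈ Ico 0 T) :
    splittingWeight T m i s =
      (Ico (i * T / m) ((i + 1) * T / m)).indicator (fun _ => (m : ℝ)) s := by
  have hfr : Int.fract (s / T) = s / T := Int.fract_eq_self.2
    ⟨div_nonneg hs.1 hT.le, (div_lt_one hT).2 hs.2⟩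
  have : s / T ∈ Ico ((i : ℝ) / m) ((i + 1) / m) ↔ s ∈ Ico (i * T / m) ((i + 1) * T / m) := by
    rw [mem_Ico, mem_Ico, le_div_iff₀ hT, div_lt_iff₀ hT, mul_div_right_comm,
      mul_div_right_comm]
  by_cases h : s ∈ Ico (i * T / m) ((i + 1) * T / m) <;>
    simp [splittingWeight, hfr, h, this]

theorem intervalAverage_splittingWeight (hT : 0 < T) (hi : i < m) :
    ⨍ s in 0..T, splittingWeight T m i s = 1 := by
  have hm : (0 : ℝ) < m := Nat.cast_pos.2 (i.zero_le.trans_lt hi)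
  have hsub : Ico (i * T / m) ((i + 1) * T / m) ⊆ Ico 0 T := Ico_subset_Ico (by positivity)
    ((div_le_iff₀ hm).2 (by
      rw [mul_comm T]; exact mul_le_mul_of_nonneg_right (by exact_mod_cast hi) hT.le))
  rw [interval_average_eq, intervalIntegral.integral_of_le hT.le, ← integral_Ico_eq_integral_Ioc,
    setIntegral_congr_fun measurableSet_Ico fun s hs => splittingWeight_of_mem_Ico hT hs,
    integral_indicator_const _ measurableSet_Ico, measureReal_restrict_apply measurableSet_Ico,
    inter_eq_left.2 hsub, Real.volume_real_Ico]
  rw [max_eq_left (by rw [sub_nonneg]; gcongr; linarith), smul_eq_mul, smul_eq_mul, sub_zero]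
  field_simp
  ring

theorem sum_splittingWeight_smul (hm : 0 < m) {s : ℝ} {i₀ : Fin m}
    (hs : Int.fract (s / T) ∈ Ico ((i₀ : ℝ) / m) ((i₀ + 1) / m)) (a : Fin m → E) :
    ∑ i : Fin m, splittingWeight T m i s • a i = (m : ℝ) • a i₀ := by
  have hfloor := (mem_Ico_div_iff_natFloor_mul_eq hm (Int.fract_nonneg _) _).1 hs
  rw [Finset.sum_eq_single i₀ (fun i _ hi => ?_) (by simp), splittingWeight, indicator_of_mem hs]
  rw [splittingWeight, indicator_of_notMem, zero_smul]
  rw [mem_Ico_div_iff_natFloor_mul_eq hm (Int.fract_nonneg _), hfloor]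
  exact fun h => hi (Fin.ext h.symm)

theorem eq_sum_splittingWeight_smul {X : Type*} (hT : 0 < T) (hm : 0 < m) {N : ℕ} (hN : 0 < N)
    {q : ℝ → X → E} {v : Fin m → X → E}
    (hq : ∀ n : ℕ, n < N → ∀ i : Fin m, ∀ t : ℝ,
      t ∈ Ico ((i : ℝ) * T / (m * N)) (((i : ℝ) + 1) * T / (m * N)) →
      ∀ x, q (t + n * T / N) x = (m : ℝ) • v i x)
    {t : ℝ} (ht : t ∈ Ico 0 T) (x : X) :
    q t x = ∑ i : Fin m, splittingWeight T m i (N * t) • v i x := by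
  have hN' : (0 : ℝ) < N := Nat.cast_pos.2 hN
  have hm' : (0 : ℝ) < m := Nat.cast_pos.2 hm
  set y := N * t / T
  have hy : 0 ≤ y := by have := ht.1; positivity
  set n := ⌊y⌋₊
  have hn : n < N := (Nat.floor_lt hy).2 <| by
    rw [div_lt_iff₀ hT]; exact mul_lt_mul_of_pos_left ht.2 hN'
  have hfract : Int.fract y = y - n := by
    rw [← Int.self_sub_floor, ← Int.natCast_floor_eq_floor hy, Int.cast_natCast]
  -- `t = n T / N + (T / N) fract y`, and `i₀` is the part of the period containing `fract y`.
  set i₀ : Fin m := ⟨⌊m * Int.fract y⌋₊, (Nat.floor_lt (by positivity)).2 <|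
    by simpa using mul_lt_mul_of_pos_left (Int.fract_lt_one y) hm'⟩
  have hi₀ : Int.fract y ∈ Ico ((i₀ : ℝ) / m) ((i₀ + 1) / m) :=
    (mem_Ico_div_iff_natFloor_mul_eq hm (Int.fract_nonneg y) _).2 rfl
  rw [sum_splittingWeight_smul hm hi₀, ← hq n hn i₀ (t - n * T / N) ?_ x, sub_add_cancel]
  have hshift : t - n * T / N = T / N * Int.fract y := by
    rw [hfract]; simp only [y]; field_simp
  have hTN : 0 < T / N := div_pos hT hN'
  have hscale : ∀ a : ℝ, a * T / (m * N) = T / N * (a / m) := fun a => by field_simp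
  rw [hshift, hscale, hscale]
  exact ⟨mul_le_mul_of_nonneg_left hi₀.1 hTN.le, mul_lt_mul_of_pos_left hi₀.2 hTN⟩

end SplittingWeight

theorem MeasureTheory.Integrable.bdd_dotProduct {α ι : Type*} [MeasurableSpace α]
    {μ : Measure α} [Fintype ι] {φ ψ : α → ι → ℝ} (hφ : Integrable φ μ)
    (hψ : AEStronglyMeasurable ψ μ) {C : ℝ} (hC : ∀ᵐ p ∂μ, ‖ψ p‖ ≤ C) :
    Integrable (fun p => ψ p ⬝ᵥ φ p) μ :=
  integrable_finsetSum _ fun j _ => (hφ.eval j).bdd_mul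
    ((continuous_apply j).comp_aestronglyMeasurable hψ)
    (hC.mono fun p hp => (norm_le_pi_norm (ψ p) j).trans hp)

theorem tendsto_setIntegral_dotProduct_of_splitting {ι X : Type*} [Fintype ι]
    [MeasurableSpace X] {μ : Measure X} [SFinite μ] {T : ℝ} (hT : 0 < T) {m : ℕ} (hm : 0 < m)
    {Ω : Set X} (hΩ : MeasurableSet Ω) {v : Fin m → X → ι → ℝ}
    (hv : ∀ i, Measurable (v i)) (hvb : ∀ i, ∃ C, ∀ x ∈ Ω, ‖v i x‖ ≤ C)
    {Q : ℕ → ℝ → X → ι → ℝ}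
    (hQ : ∀ N : ℕ, 0 < N → ∀ n : ℕ, n < N → ∀ i : Fin m, ∀ t : ℝ,
      t ∈ Ico ((i : ℝ) * T / (m * N)) (((i : ℝ) + 1) * T / (m * N)) →
      ∀ x, Q N (t + n * T / N) x = (m : ℝ) • v i x)
    {φ : ℝ × X → ι → ℝ} (hφ : IntegrableOn φ (Ioo 0 T ×ˢ Ω) (volume.prod μ)) :
    Tendsto (fun N : ℕ => ∫ p in Ioo 0 T ×ˢ Ω, Q N p.1 p.2 ⬝ᵥ φ p ∂(volume.prod μ))
      atTop (𝓝 (∫ p in Ioo 0 T ×ˢ Ω, (∑ i, v i p.2) ⬝ᵥ φ p ∂(volume.prod μ))) := by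
  set S := Ioo 0 T ×ˢ Ω
  have hS : MeasurableSet S := measurableSet_Ioo.prod hΩ
  have hG : ∀ i, IntegrableOn (fun p => v i p.2 ⬝ᵥ φ p) S (volume.prod μ) := fun i => by
    obtain ⟨C, hC⟩ := hvb i
    refine hφ.bdd_dotProduct ((hv i).comp measurable_snd).aestronglyMeasurable (C := C) ?_
    filter_upwards [ae_restrict_mem hS] with p hp using hC _ hp.2
  have hLHS : ∀ N : ℕ, 0 < N → ∫ p in S, Q N p.1 p.2 ⬝ᵥ φ p ∂(volume.prod μ)
      = ∑ i : Fin m,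
          ∫ p in S, splittingWeight T m i (N * p.1) • (v i p.2 ⬝ᵥ φ p) ∂(volume.prod μ) := by
    intro N hN
    have hint : ∀ i : Fin m, IntegrableOn
        (fun p => splittingWeight T m i (N * p.1) • (v i p.2 ⬝ᵥ φ p)) S (volume.prod μ) :=
      fun i => (hG i).bdd_smul m
        (measurable_splittingWeight.comp (measurable_fst.const_mul (N : ℝ))).aestronglyMeasurable
        (Eventually.of_forall fun _ => norm_splittingWeight_le _)
    rw [← integral_finsetSum _ fun i _ => hint i]
    refine setIntegral_congr_fun hS fun p hp => ?_
    simp only [eq_sum_splittingWeight_smul hT hm hN (hQ N hN) (Ioo_subset_Ico_self hp.1),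
      sum_dotProduct, smul_dotProduct]
  simp_rw [sum_dotProduct]
  rw [integral_finsetSum _ fun i _ => hG i]
  refine Tendsto.congr' ((eventually_gt_atTop 0).mono fun N hN => (hLHS N hN).symm)
    (tendsto_finsetSum _ fun i _ => ?_)
  simpa [intervalAverage_splittingWeight hT i.isLt] using
    (periodic_splittingWeight (m := m) (i := i) hT.ne').tendsto_setIntegral_prod_comp_mul_smul hT
      measurable_splittingWeight norm_splittingWeight_le hS (hG i)

theorem stmt_0_general (T : ℝ) (hT : 0 < T) (d : ℕ)
    (Ω : Set (Fin d → ℝ)) (hΩb : Bornology.IsBounded Ω) (hΩm : MeasurableSet Ω)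
    (σ : ℝ → ℝ) (K : NNReal) (hσ : LipschitzWith K σ)
    (m : ℕ) (hm : 0 < m)
    (A W : Fin m → Matrix (Fin d) (Fin d) ℝ) (B : Fin m → Fin d → ℝ)
    (Q : ℕ → ℝ → (Fin d → ℝ) → (Fin d → ℝ))
    (hQ : ∀ N : ℕ, 0 < N → ∀ n : ℕ, n < N → ∀ i : Fin m, ∀ t : ℝ,
      t ∈ Set.Ico ((i : ℝ) * T / (m * N)) (((i : ℝ) + 1) * T / (m * N)) →
      ∀ x : Fin d → ℝ,
        Q N (t + n * T / N) x
          = (m : ℝ) • (A i).mulVec (fun j => σ ((W i).mulVec x j + B i j))) :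
    ∀ φ : ℝ × (Fin d → ℝ) → (Fin d → ℝ),
      IntegrableOn φ (Set.Ioo 0 T ×ˢ Ω) →
      Tendsto
        (fun N : ℕ => ∫ p in Set.Ioo 0 T ×ˢ Ω, ∑ j, Q N p.1 p.2 j * φ p j)
        atTop
        (nhds (∫ p in Set.Ioo 0 T ×ˢ Ω,
          ∑ j, (∑ i, (A i).mulVec (fun k => σ ((W i).mulVec p.2 k + B i k))) j * φ p j)) := by
  intro φ hφ
  have hv : ∀ i, Continuous fun x => (A i).mulVec (fun k => σ ((W i).mulVec x k + B i k)) := by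
    have := hσ.continuous
    fun_prop
  refine tendsto_setIntegral_dotProduct_of_splitting hT hm hΩm (fun i => (hv i).measurable)
    (fun i => ?_) hQ hφ
  obtain ⟨C, hC⟩ := hΩb.isCompact_closure.exists_bound_of_continuousOn (hv i).continuousOn
  exact ⟨C, fun x hx => hC x (subset_closure hx)⟩

/-- Let `Ω ⊆ ℝ^d` be bounded and measurable, `σ` globally Lipschitz and `Σ` its
coordinatewise application. Fix weights `A i, W i ∈ ℝ^{d×d}`, `B i ∈ ℝ^d` for `i = 0,…,m-1`.
The `T/N`-periodic-in-time vector fields `Q^N`, equal to `m • A i Σ(W i x + B i)` on the `i`-th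
subinterval of each period, converge weakly-* in `L^∞((0,T)×Ω)^d` to the time-independent field
`x ↦ ∑ i, A i Σ(W i x + B i)`: for every `φ ∈ L¹((0,T)×Ω; ℝ^d)`,
`∫∫ Q^N(t,x)·φ(t,x) → ∫∫ (∑ i, A i Σ(W i x + B i))·φ(t,x)` as `N → ∞`. -/
theorem stmt_0 (T : ℝ) (hT : 0 < T) (d : ℕ) (hd : 1 ≤ d)
    (Ω : Set (Fin d → ℝ)) (hΩb : Bornology.IsBounded Ω) (hΩm : MeasurableSet Ω)
    (σ : ℝ → ℝ) (K : NNReal) (hσ : LipschitzWith K σ)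
    (m : ℕ) (hm : 0 < m)
    (A W : Fin m → Matrix (Fin d) (Fin d) ℝ) (B : Fin m → Fin d → ℝ)
    (Q : ℕ → ℝ → (Fin d → ℝ) → (Fin d → ℝ))
    (hQ : ∀ N : ℕ, 0 < N → ∀ n : ℕ, n < N → ∀ i : Fin m, ∀ t : ℝ,
      t ∈ Set.Ico ((i : ℝ) * T / (m * N)) (((i : ℝ) + 1) * T / (m * N)) →
      ∀ x : Fin d → ℝ,
        Q N (t + n * T / N) x
          = (m : ℝ) • (A i).mulVec (fun j => σ ((W i).mulVec x j + B i j))) :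
    ∀ φ : ℝ × (Fin d → ℝ) → (Fin d → ℝ),
      IntegrableOn φ (Set.Ioo 0 T ×ˢ Ω) →
      Tendsto
        (fun N : ℕ => ∫ p in Set.Ioo 0 T ×ˢ Ω, ∑ j, Q N p.1 p.2 j * φ p j)
        atTop
        (nhds (∫ p in Set.Ioo 0 T ×ˢ Ω,
          ∑ j, (∑ i, (A i).mulVec (fun k => σ ((W i).mulVec p.2 k + B i k))) j * φ p j)) :=
  stmt_0_general T hT d Ω hΩb hΩm σ K hσ m hm A W B Q hQ
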